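/- Let A ∈ ℝ^{m×n}, let Θ ∈ ℝ^{n×n} be diagonal with strictly positive diagonal entries, and let R_d ∈ ℝ^{m×m} be symmetric positive definite. Then every strictly negative eigenvalue μ of the symmetric matrix M = [[−Θ^{-1}, Aᵀ],[A, R_d]] satisfies μ ≤ −min_j (Θ^{-1})_{jj}. In particular the largest negative eigenvalue μ_{-1} of M satisfies μ_{-1} ≤ −min_j (Θ^{-1})_{jj}. -/

import Mathlib

/-!
Write an eigenvector as `x = (u, v)` along the two blocks and pair the two block rows of
`M x = μ x` with `u` and `v`. Since the off-diagonal blocks are transposes of each other the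
cross terms cancel, leaving `μ ‖v‖² = vᵀ R_d v + μ ‖u‖² + uᵀ Θ⁻¹ u ≥ (μ + θ) ‖u‖²` with
`θ = min_j (Θ⁻¹)_jj`. If `-θ < μ < 0`, the left side is `≤ 0` while the right side is `≥ 0`,
which forces `u = 0` and then `v = 0`.
-/

open Matrix

namespace Matrix

variable {ι κ : Type*} [Fintype ι] [Fintype κ]

theorem iInf_mul_dotProduct_self_le_dotProduct_diagonal_mulVec [DecidableEq ι] (e u : ι → ℝ) :
    (⨅ j, e j) * (u ⬝ᵥ u) ≤ u ⬝ᵥ (diagonal e *ᵥ u) := by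
  simp only [dotProduct, mulVec_diagonal, Finset.mul_sum]
  refine Finset.sum_le_sum fun j _ => ?_
  calc (⨅ j, e j) * (u j * u j) ≤ e j * (u j * u j) :=
        mul_le_mul_of_nonneg_right (ciInf_le (Set.finite_range e).bddBelow j) (mul_self_nonneg _)
    _ = u j * (e j * u j) := by ring

theorem add_dotProduct_mulVec_le_of_blocks_eq_smul {P : Matrix ι ι ℝ} {A : Matrix κ ι ℝ}
    {R : Matrix κ κ ℝ} {θ μ : ℝ} (hP : ∀ w, θ * (w ⬝ᵥ w) ≤ w ⬝ᵥ (P *ᵥ w)) {u : ι → ℝ}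
    {v : κ → ℝ} (h₁ : -P *ᵥ u + Aᵀ *ᵥ v = μ • u) (h₂ : A *ᵥ u + R *ᵥ v = μ • v) :
    v ⬝ᵥ (R *ᵥ v) + (μ + θ) * (u ⬝ᵥ u) ≤ μ * (v ⬝ᵥ v) := by
  have e₁ : -(u ⬝ᵥ (P *ᵥ u)) + u ⬝ᵥ (Aᵀ *ᵥ v) = μ * (u ⬝ᵥ u) := by
    rw [← dotProduct_neg, ← neg_mulVec, ← dotProduct_add, h₁, dotProduct_smul, smul_eq_mul]
  have e₂ : v ⬝ᵥ (A *ᵥ u) + v ⬝ᵥ (R *ᵥ v) = μ * (v ⬝ᵥ v) := by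
    rw [← dotProduct_add, h₂, dotProduct_smul, smul_eq_mul]
  have cross : u ⬝ᵥ (Aᵀ *ᵥ v) = v ⬝ᵥ (A *ᵥ u) := by
    rw [dotProduct_mulVec, vecMul_transpose, dotProduct_comm]
  linarith [hP u]

theorem le_neg_of_fromBlocks_mulVec_eq_smul {P : Matrix ι ι ℝ} {A : Matrix κ ι ℝ}
    {R : Matrix κ κ ℝ} (hR : R.PosSemidef) {θ : ℝ} (hP : ∀ w, θ * (w ⬝ᵥ w) ≤ w ⬝ᵥ (P *ᵥ w))
    {μ : ℝ} (hμ : μ < 0) {x : ι ⊕ κ → ℝ} (hx : x ≠ 0)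
    (hMx : fromBlocks (-P) Aᵀ A R *ᵥ x = μ • x) : μ ≤ -θ := by
  by_contra! hθ
  obtain ⟨u, v, rfl⟩ : ∃ u v, x = Sum.elim u v := ⟨_, _, (Sum.elim_comp_inl_inr x).symm⟩
  rw [fromBlocks_mulVec] at hMx
  have h₁ : -P *ᵥ u + Aᵀ *ᵥ v = μ • u := funext fun i => by simpa using congrFun hMx (.inl i)
  have h₂ : A *ᵥ u + R *ᵥ v = μ • v := funext fun i => by simpa using congrFun hMx (.inr i)
  have energy := add_dotProduct_mulVec_le_of_blocks_eq_smul hP h₁ h₂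
  have hRv : 0 ≤ v ⬝ᵥ (R *ᵥ v) := by simpa using hR.dotProduct_mulVec_nonneg v
  have huu : 0 ≤ u ⬝ᵥ u := by simpa using dotProduct_self_star_nonneg u
  have hvv : 0 ≤ v ⬝ᵥ v := by simpa using dotProduct_self_star_nonneg v
  have hu : u ⬝ᵥ u = 0 := by nlinarith
  have hv : v ⬝ᵥ v = 0 := by nlinarith
  apply hx
  rw [dotProduct_self_eq_zero.mp hu, dotProduct_self_eq_zero.mp hv, Sum.elim_zero_zero]

end Matrix

theorem stmt_9 {m n : ℕ} (A : Matrix (Fin m) (Fin n) ℝ)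
    (d : Fin n → ℝ)
    (Rd : Matrix (Fin m) (Fin m) ℝ) (hRd : Rd.PosDef)
    (M : Matrix (Fin n ⊕ Fin m) (Fin n ⊕ Fin m) ℝ)
    (hMdef : M = Matrix.fromBlocks (-(Matrix.diagonal d)⁻¹) Aᵀ A Rd) :
    ∀ μ : ℝ, μ < 0 →
      ∀ x : Fin n ⊕ Fin m → ℝ, x ≠ 0 → M.mulVec x = μ • x →
      μ ≤ -(⨅ j, (Matrix.diagonal d)⁻¹ j j) := by
  intro μ hμ x hx hMx
  subst hMdef
  refine le_neg_of_fromBlocks_mulVec_eq_smul hRd.posSemidef (fun w => ?_) hμ hx hMx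
  simpa only [inv_diagonal, diagonal_apply_eq] using
    iInf_mul_dotProduct_self_le_dotProduct_diagonal_mulVec _ w
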